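/- Let λ, α ∈ ℂ∖{0}, β, γ, η, ε, θ ∈ ℂ with (η,ε,θ) ≠ (0,0,0), let M(λ,α,β,γ) be any one of the 𝔏-modules Ω(λ,α,β,γ), Δ(λ,α,β,γ), Θ(λ,α,β,γ), and let V(η,ε,θ) be an irreducible highest weight 𝔏-module with highest weight (η,ε,θ). Then for every integer r > 2 and every nonzero g(s,t) ∈ M(λ,α,β,γ), there exist v ∈ V(η,ε,θ) and l, m ∈ ℤ such that ω_{l,m}^{(r)} · (g(s,t) ⊗ v) ≠ 0 in the tensor product 𝔏-module M(λ,α,β,γ) ⊗ V(η,ε,θ), where ω_{l,m}^{(r)} = ∑_{i=0}^{r} C(r,i)(−1)^{r−i} d_{l−m−i} d_{m+i} is an element of the universal enveloping algebra U(𝔏) and C(r,i) denotes the binomial coefficient. -/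

import Mathlib

open scoped TensorProduct

noncomputable section

/-- The affine-Virasoro algebra of type `A₁`: a complex Lie algebra `L` equipped with a
basis `{e_i, f_i, h_i, d_i (i ∈ ℤ), C}` subject to the defining bracket relations. -/
structure AVAlgebra (L : Type) [LieRing L] [LieAlgebra ℂ L] where
  e : ℤ → L
  f : ℤ → L
  h : ℤ → L
  d : ℤ → L
  cC : L
  bracket_ef : ∀ i j : ℤ, ⁅e i, f j⁆ = h (i + j) + (if i + j = 0 then (i : ℂ) • cC else 0)
  bracket_he : ∀ i j : ℤ, ⁅h i, e j⁆ = (2 : ℂ) • e (i + j)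
  bracket_hf : ∀ i j : ℤ, ⁅h i, f j⁆ = (-2 : ℂ) • f (i + j)
  bracket_dd : ∀ i j : ℤ, ⁅d i, d j⁆ = ((j : ℂ) - (i : ℂ)) • d (i + j)
      + (if i + j = 0 then (((i : ℂ) ^ 3 - (i : ℂ)) / 12) • cC else 0)
  bracket_dh : ∀ i j : ℤ, ⁅d i, h j⁆ = (j : ℂ) • h (i + j)
  bracket_hh : ∀ i j : ℤ, ⁅h i, h j⁆ = (if i + j = 0 then ((-2 : ℂ) * (i : ℂ)) • cC else 0)
  bracket_de : ∀ i j : ℤ, ⁅d i, e j⁆ = (j : ℂ) • e (i + j)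
  bracket_df : ∀ i j : ℤ, ⁅d i, f j⁆ = (j : ℂ) • f (i + j)
  bracket_ee : ∀ i j : ℤ, ⁅e i, e j⁆ = 0
  bracket_ff : ∀ i j : ℤ, ⁅f i, f j⁆ = 0
  central : ∀ x : L, ⁅cC, x⁆ = 0
  indep : LinearIndependent ℂ
    (Sum.elim (fun q : Fin 4 × ℤ => ![e, f, h, d] q.1 q.2) fun _ : Unit => cC)
  spans : Submodule.span ℂ
    (Set.range (Sum.elim (fun q : Fin 4 × ℤ => ![e, f, h, d] q.1 q.2) fun _ : Unit => cC)) = ⊤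

/-- The polynomial ring ℂ[s,t]. -/
abbrev Pst : Type := MvPolynomial (Fin 2) ℂ

/-- The variable `s` of ℂ[s,t]. -/
def sVar : Pst := MvPolynomial.X 0

/-- The variable `t` of ℂ[s,t]. -/
def tVar : Pst := MvPolynomial.X 1

/-- The substitution operator `g(s,t) ↦ g(s-a, t-b)` on ℂ[s,t]. -/
def shiftST (a b : ℂ) : Module.End ℂ Pst :=
  (MvPolynomial.aeval ![sVar - MvPolynomial.C a, tVar - MvPolynomial.C b]).toLinearMap

/-- The operator by which `d_i` acts on each of `Ω(λ,α,β,γ)`, `Δ(λ,α,β,γ)`, `Θ(λ,α,β,γ)`: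
`g(s,t) ↦ λ^i (s+iγ) g(s-i,t)`. -/
def dOp (lam ga : ℂ) (i : ℤ) : Module.End ℂ Pst :=
  lam ^ i • (LinearMap.mulLeft ℂ (sVar + MvPolynomial.C ((i : ℂ) * ga)) ∘ₗ shiftST i 0)

/-- The operator by which `h_i` acts: `g(s,t) ↦ λ^i t g(s-i,t)`. -/
def hOp (lam : ℂ) (i : ℤ) : Module.End ℂ Pst :=
  lam ^ i • (LinearMap.mulLeft ℂ tVar ∘ₗ shiftST i 0)

/-- The operator by which `e_i` acts on `Ω(λ,α,β,γ)`: `g(s,t) ↦ λ^i α g(s-i,t-2)`. -/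
def omegaE (lam al : ℂ) (i : ℤ) : Module.End ℂ Pst :=
  (lam ^ i * al) • shiftST i 2

/-- The operator by which `f_i` acts on `Ω(λ,α,β,γ)`:
`g(s,t) ↦ -(λ^i/α)(t/2-β)(t/2+β+1) g(s-i,t+2)`. -/
def omegaF (lam al be : ℂ) (i : ℤ) : Module.End ℂ Pst :=
  (-(lam ^ i / al)) • (LinearMap.mulLeft ℂ
    ((MvPolynomial.C (2⁻¹ : ℂ) * tVar - MvPolynomial.C be) *
      (MvPolynomial.C (2⁻¹ : ℂ) * tVar + MvPolynomial.C (be + 1))) ∘ₗ shiftST i (-2))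

/-- The operator by which `e_i` acts on `Δ(λ,α,β,γ)`:
`g(s,t) ↦ -(λ^i/α)(t/2+β)(t/2-β-1) g(s-i,t-2)`. -/
def deltaE (lam al be : ℂ) (i : ℤ) : Module.End ℂ Pst :=
  (-(lam ^ i / al)) • (LinearMap.mulLeft ℂ
    ((MvPolynomial.C (2⁻¹ : ℂ) * tVar + MvPolynomial.C be) *
      (MvPolynomial.C (2⁻¹ : ℂ) * tVar - MvPolynomial.C (be + 1))) ∘ₗ shiftST i 2)

/-- The operator by which `f_i` acts on `Δ(λ,α,β,γ)`: `g(s,t) ↦ λ^i α g(s-i,t+2)`. -/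
def deltaF (lam al : ℂ) (i : ℤ) : Module.End ℂ Pst :=
  (lam ^ i * al) • shiftST i (-2)

/-- The operator by which `e_i` acts on `Θ(λ,α,β,γ)`: `g(s,t) ↦ λ^i α (t/2+β) g(s-i,t-2)`. -/
def thetaE (lam al be : ℂ) (i : ℤ) : Module.End ℂ Pst :=
  (lam ^ i * al) • (LinearMap.mulLeft ℂ
    (MvPolynomial.C (2⁻¹ : ℂ) * tVar + MvPolynomial.C be) ∘ₗ shiftST i 2)

/-- The operator by which `f_i` acts on `Θ(λ,α,β,γ)`: `g(s,t) ↦ -(λ^i/α)(t/2-β) g(s-i,t+2)`. -/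
def thetaF (lam al be : ℂ) (i : ℤ) : Module.End ℂ Pst :=
  (-(lam ^ i / al)) • (LinearMap.mulLeft ℂ
    (MvPolynomial.C (2⁻¹ : ℂ) * tVar - MvPolynomial.C be) ∘ₗ shiftST i (-2))

/-- `M` is an 𝔏-module whose underlying space is ℂ[s,t] (via the linear equivalence `φ`) and
on which the basis elements of 𝔏 act by the prescribed families of operators (`C` acting by
zero). -/
def ActsAs {L : Type} [LieRing L] [LieAlgebra ℂ L] (A : AVAlgebra L)
    (M : Type) [AddCommGroup M] [Module ℂ M] [LieRingModule L M]
    (φ : M ≃ₗ[ℂ] Pst) (Fe Ff Fh Fd : ℤ → Module.End ℂ Pst) : Prop :=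
  (∀ (i : ℤ) (m : M), φ ⁅A.e i, m⁆ = Fe i (φ m)) ∧
  (∀ (i : ℤ) (m : M), φ ⁅A.f i, m⁆ = Ff i (φ m)) ∧
  (∀ (i : ℤ) (m : M), φ ⁅A.h i, m⁆ = Fh i (φ m)) ∧
  (∀ (i : ℤ) (m : M), φ ⁅A.d i, m⁆ = Fd i (φ m)) ∧
  (∀ m : M, ⁅A.cC, m⁆ = 0)

/-- `M` is (a copy of) the 𝔏-module `Ω(λ,α,β,γ)`. -/
def IsOmega {L : Type} [LieRing L] [LieAlgebra ℂ L] (A : AVAlgebra L)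
    (lam al be ga : ℂ) (M : Type) [AddCommGroup M] [Module ℂ M] [LieRingModule L M]
    (φ : M ≃ₗ[ℂ] Pst) : Prop :=
  ActsAs A M φ (omegaE lam al) (omegaF lam al be) (hOp lam) (dOp lam ga)

/-- `M` is (a copy of) the 𝔏-module `Δ(λ,α,β,γ)`. -/
def IsDelta {L : Type} [LieRing L] [LieAlgebra ℂ L] (A : AVAlgebra L)
    (lam al be ga : ℂ) (M : Type) [AddCommGroup M] [Module ℂ M] [LieRingModule L M]
    (φ : M ≃ₗ[ℂ] Pst) : Prop :=
  ActsAs A M φ (deltaE lam al be) (deltaF lam al) (hOp lam) (dOp lam ga)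

/-- `M` is (a copy of) the 𝔏-module `Θ(λ,α,β,γ)`. -/
def IsTheta {L : Type} [LieRing L] [LieAlgebra ℂ L] (A : AVAlgebra L)
    (lam al be ga : ℂ) (M : Type) [AddCommGroup M] [Module ℂ M] [LieRingModule L M]
    (φ : M ≃ₗ[ℂ] Pst) : Prop :=
  ActsAs A M φ (thetaE lam al be) (thetaF lam al be) (hOp lam) (dOp lam ga)

/-- `v` is a highest weight vector of weight `(η, ε, θ)`. -/
def IsHWVector {L : Type} [LieRing L] [LieAlgebra ℂ L] (A : AVAlgebra L)
    (V : Type) [AddCommGroup V] [Module ℂ V] [LieRingModule L V]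
    (eta eps th : ℂ) (v : V) : Prop :=
  ⁅A.e 0, v⁆ = 0 ∧
  (∀ i : ℤ, 1 ≤ i → ⁅A.e i, v⁆ = 0 ∧ ⁅A.f i, v⁆ = 0 ∧ ⁅A.h i, v⁆ = 0 ∧ ⁅A.d i, v⁆ = 0) ∧
  ⁅A.d 0, v⁆ = eta • v ∧ ⁅A.h 0, v⁆ = eps • v ∧ ⁅A.cC, v⁆ = th • v

/-- `V` is an irreducible highest weight 𝔏-module with highest weight `(η, ε, θ)`: it is
irreducible and generated by a nonzero highest weight vector of weight `(η, ε, θ)`. -/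
def IsIrrHW {L : Type} [LieRing L] [LieAlgebra ℂ L] (A : AVAlgebra L)
    (V : Type) [AddCommGroup V] [Module ℂ V] [LieRingModule L V] [LieModule ℂ L V]
    (eta eps th : ℂ) : Prop :=
  LieModule.IsIrreducible ℂ L V ∧
  ∃ v : V, v ≠ 0 ∧ LieSubmodule.lieSpan ℂ L ({v} : Set V) = ⊤ ∧ IsHWVector A V eta eps th v

/-- The action of the universal enveloping algebra `U(𝔏)` on an 𝔏-module `X`. -/
def uAct {L : Type} [LieRing L] [LieAlgebra ℂ L]
    (X : Type) [AddCommGroup X] [Module ℂ X] [LieRingModule L X] [LieModule ℂ L X] :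
    UniversalEnvelopingAlgebra ℂ L →ₐ[ℂ] Module.End ℂ X :=
  UniversalEnvelopingAlgebra.lift ℂ (LieModule.toEnd ℂ L X)

/-- The element `ω_{l,m}^{(r)} = ∑_{i=0}^{r} C(r,i)(−1)^{r−i} d_{l−m−i} d_{m+i}` of `U(𝔏)`. -/
def omegaLMR {L : Type} [LieRing L] [LieAlgebra ℂ L] (A : AVAlgebra L)
    (l m : ℤ) (r : ℕ) : UniversalEnvelopingAlgebra ℂ L :=
  ∑ i ∈ Finset.range (r + 1),
    ((r.choose i : ℂ) * (-1) ^ (r - i)) •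
      (UniversalEnvelopingAlgebra.ι ℂ (A.d (l - m - i)) *
        UniversalEnvelopingAlgebra.ι ℂ (A.d (m + i)))

/-!
On `ℂ[s,t]` the operator `d_a d_b` is multiplication by `λ^{a+b} (s + aγ)(s - a + bγ)` followed
by the shift `s ↦ s - (a + b)`. Along `a = l - m - i`, `b = m + i` the multiplier is quadratic in
`i`, so `ω_{l,m}^{(r)}`, an `r`-th finite difference in `i`, kills `M` as soon as `r ≥ 3`.
In `V` one finds `w` and `k` with `d_k w ≠ 0` and `d_j w = 0` for `j > k` (`w = v` if `η ≠ 0`,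
otherwise `w = h_{-1} v`). For `m = k + 1`, `l = 2k + 1 + r` the only surviving term of
`ω_{l,m}^{(r)} · (g ⊗ w)` is then `d_{m+r} g ⊗ d_k w`, which is nonzero because each `d_j`
acts injectively on `M`.
-/

open Finset

theorem sum_range_choose_smul_eq_zero_of_fwdDiff_iter_eq_zero {R G : Type*} [Ring R]
    [AddCommGroup G] [Module R G] {f : ℕ → G} {n r : ℕ} (hf : (fwdDiff 1)^[n] f = 0) (hnr : n ≤ r) :
    ∑ i ∈ range (r + 1), ((r.choose i : R) * (-1) ^ (r - i)) • f i = 0 := by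
  obtain ⟨q, rfl⟩ := Nat.exists_eq_add_of_le' hnr
  calc _ = (fwdDiff 1)^[q + n] f 0 := by
        rw [fwdDiff_iter_eq_sum_shift]
        refine sum_congr rfl fun i _ => ?_
        rw [← Int.cast_smul_eq_zsmul R, zero_add, smul_eq_mul, mul_one]
        push_cast
        exact congrArg (· • f i) (Nat.cast_commute _ _).eq
    _ = 0 := by
        rw [Function.iterate_add_apply, hf]
        exact congrFun (Function.iterate_fixed (fwdDiff_const 1 0) q) 0

section SubstitutionOperators

lemma shiftST_apply (a b : ℂ) (p : Pst) :
    shiftST a b p = MvPolynomial.aeval ![sVar - MvPolynomial.C a, tVar - MvPolynomial.C b] p :=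
  rfl

lemma shiftST_mul (a b : ℂ) (p q : Pst) :
    shiftST a b (p * q) = shiftST a b p * shiftST a b q := by
  simp [shiftST_apply]

lemma shiftST_sVar (a b : ℂ) : shiftST a b sVar = sVar - MvPolynomial.C a := by
  simp [shiftST_apply, sVar]

lemma shiftST_C (a b c : ℂ) : shiftST a b (MvPolynomial.C c) = MvPolynomial.C c := by
  simp [shiftST_apply, MvPolynomial.algebraMap_eq]

lemma shiftST_shiftST (a b c d : ℂ) (p : Pst) :
    shiftST a b (shiftST c d p) = shiftST (a + c) (b + d) p := by
  rw [shiftST_apply, shiftST_apply, MvPolynomial.comp_aeval_apply, shiftST_apply]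
  congr 2
  funext i
  fin_cases i <;> simp [sVar, tVar, MvPolynomial.algebraMap_eq, sub_sub]

lemma shiftST_zero_zero (p : Pst) : shiftST 0 0 p = p := by
  have hX : ![sVar - MvPolynomial.C (0 : ℂ), tVar - MvPolynomial.C (0 : ℂ)] = MvPolynomial.X := by
    funext i
    fin_cases i <;> simp [sVar, tVar]
  rw [shiftST_apply, hX, MvPolynomial.aeval_X_left_apply]

lemma shiftST_injective (a b : ℂ) : Function.Injective (shiftST a b) :=
  Function.LeftInverse.injective (g := shiftST (-a) (-b)) fun p => by
    rw [shiftST_shiftST, neg_add_cancel, neg_add_cancel, shiftST_zero_zero]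

lemma sVar_add_C_ne_zero (c : ℂ) : sVar + MvPolynomial.C c ≠ 0 := fun h => by
  simpa [sVar] using congrArg (MvPolynomial.eval fun _ => 1 - c) h

variable {lam : ℂ} (ga : ℂ)

lemma dOp_apply (i : ℤ) (p : Pst) :
    dOp lam ga i p = lam ^ i • ((sVar + MvPolynomial.C ((i : ℂ) * ga)) * shiftST i 0 p) :=
  rfl

lemma dOp_ne_zero (hlam : lam ≠ 0) (i : ℤ) {p : Pst} (hp : p ≠ 0) : dOp lam ga i p ≠ 0 := by
  rw [dOp_apply]
  exact smul_ne_zero (zpow_ne_zero i hlam)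
    (mul_ne_zero (sVar_add_C_ne_zero _) ((map_ne_zero_iff _ (shiftST_injective _ _)).mpr hp))

lemma dOp_dOp (hlam : lam ≠ 0) (a b : ℤ) (p : Pst) :
    dOp lam ga a (dOp lam ga b p) =
      lam ^ (a + b) • ((sVar + MvPolynomial.C ((a : ℂ) * ga)) *
        (sVar - MvPolynomial.C (a : ℂ) + MvPolynomial.C ((b : ℂ) * ga)) *
          shiftST ((a + b : ℤ) : ℂ) 0 p) := by
  rw [dOp_apply, dOp_apply, map_smul, shiftST_mul, map_add, shiftST_sVar, shiftST_C,
    shiftST_shiftST, add_zero, mul_smul_comm, smul_smul, ← zpow_add₀ hlam, mul_assoc,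
    Int.cast_add]

theorem sum_choose_smul_dOp_dOp_eq_zero (hlam : lam ≠ 0) {r : ℕ} (hr : 3 ≤ r) (l m : ℤ)
    (p : Pst) :
    ∑ i ∈ range (r + 1), ((r.choose i : ℂ) * (-1) ^ (r - i)) •
      dOp lam ga (l - m - i) (dOp lam ga (m + i) p) = 0 := by
  set Q : ℕ → Pst := fun i => (sVar + MvPolynomial.C (((l - m - i : ℤ) : ℂ) * ga)) *
    (sVar - MvPolynomial.C ((l - m - i : ℤ) : ℂ) + MvPolynomial.C (((m + i : ℤ) : ℂ) * ga))
  have hQ : (fwdDiff 1)^[3] Q = 0 := by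
    funext i
    show fwdDiff 1 (fwdDiff 1 (fwdDiff 1 Q)) i = 0
    simp only [fwdDiff, Q]
    push_cast
    simp only [map_add, map_sub, map_mul, map_one]
    ring
  calc _ = ∑ i ∈ range (r + 1),
        lam ^ l • ((((r.choose i : ℂ) * (-1) ^ (r - i)) • Q i) * shiftST l 0 p) :=
        sum_congr rfl fun i _ => by
          rw [dOp_dOp ga hlam, sub_add_add_cancel, sub_add_cancel, smul_comm,
            smul_mul_assoc]
    _ = lam ^ l • ((∑ i ∈ range (r + 1), ((r.choose i : ℂ) * (-1) ^ (r - i)) • Q i) *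
          shiftST l 0 p) := by
        rw [← smul_sum, ← sum_mul]
    _ = 0 := by
        rw [sum_range_choose_smul_eq_zero_of_fwdDiff_iter_eq_zero hQ hr, zero_mul, smul_zero]

end SubstitutionOperators

theorem tmul_ne_zero {K M N : Type*} [Field K] [AddCommGroup M] [Module K M] [AddCommGroup N]
    [Module K N] {x : M} {y : N} (hx : x ≠ 0) (hy : y ≠ 0) : x ⊗ₜ[K] y ≠ 0 := fun h => by
  obtain ⟨f, hf⟩ := Module.Projective.exists_dual_eq_one K hx
  obtain ⟨g, hg⟩ := Module.Projective.exists_dual_eq_one K hy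
  simpa [hf, hg] using congrArg (LinearMap.mul' K K ∘ₗ TensorProduct.map f g) h

theorem lie_lie_tmul_of_lie_eq_zero {R L M N : Type*} [CommRing R] [LieRing L] [LieAlgebra R L]
    [AddCommGroup M] [Module R M] [LieRingModule L M] [LieModule R L M]
    [AddCommGroup N] [Module R N] [LieRingModule L N] [LieModule R L N]
    (x : L) {y : L} (m : M) {n : N} (hn : ⁅y, n⁆ = 0) :
    ⁅x, ⁅y, m ⊗ₜ[R] n⁆⁆ = ⁅x, ⁅y, m⁆⁆ ⊗ₜ n + ⁅y, m⁆ ⊗ₜ ⁅x, n⁆ := by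
  rw [TensorProduct.LieModule.lie_tmul_right, hn, TensorProduct.tmul_zero, add_zero,
    TensorProduct.LieModule.lie_tmul_right]

section LieModules

variable {L : Type} [LieRing L] [LieAlgebra ℂ L] (A : AVAlgebra L)

lemma uAct_ι_mul_ι (X : Type) [AddCommGroup X] [Module ℂ X] [LieRingModule L X]
    [LieModule ℂ L X] (x y : L) (z : X) :
    uAct X (UniversalEnvelopingAlgebra.ι ℂ x * UniversalEnvelopingAlgebra.ι ℂ y) z =
      ⁅x, ⁅y, z⁆⁆ := by
  simp [uAct]

lemma uAct_omegaLMR (X : Type) [AddCommGroup X] [Module ℂ X] [LieRingModule L X]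
    [LieModule ℂ L X] (l m : ℤ) (r : ℕ) (z : X) :
    uAct X (omegaLMR A l m r) z = ∑ i ∈ range (r + 1),
      ((r.choose i : ℂ) * (-1) ^ (r - i)) • ⁅A.d (l - m - i), ⁅A.d (m + i), z⁆⁆ := by
  simp only [omegaLMR, map_sum, map_smul, LinearMap.sum_apply, LinearMap.smul_apply, uAct_ι_mul_ι]

variable {M : Type} [AddCommGroup M] [Module ℂ M] [LieRingModule L M] {φ : M ≃ₗ[ℂ] Pst}
  {lam ga : ℂ}

lemma lie_d_ne_zero (hlam : lam ≠ 0) (hd : ∀ (i : ℤ) (x : M), φ ⁅A.d i, x⁆ = dOp lam ga i (φ x))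
    (i : ℤ) {g : M} (hg : g ≠ 0) : ⁅A.d i, g⁆ ≠ 0 := by
  rw [← φ.map_ne_zero_iff, hd]
  exact dOp_ne_zero ga hlam i (φ.map_ne_zero_iff.mpr hg)

variable [LieModule ℂ L M]

theorem uAct_omegaLMR_eq_zero (hlam : lam ≠ 0)
    (hd : ∀ (i : ℤ) (x : M), φ ⁅A.d i, x⁆ = dOp lam ga i (φ x)) {r : ℕ} (hr : 3 ≤ r) (l m : ℤ)
    (g : M) : uAct M (omegaLMR A l m r) g = 0 := by
  rw [← φ.map_eq_zero_iff, uAct_omegaLMR, map_sum]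
  simp only [map_smul, hd]
  exact sum_choose_smul_dOp_dOp_eq_zero ga hlam hr l m (φ g)

variable {V : Type} [AddCommGroup V] [Module ℂ V] [LieRingModule L V] [LieModule ℂ L V]

lemma AVAlgebra.lie_d_lie_h (j i : ℤ) (v : V) :
    ⁅A.d j, ⁅A.h i, v⁆⁆ = (i : ℂ) • ⁅A.h (j + i), v⁆ + ⁅A.h i, ⁅A.d j, v⁆⁆ := by
  rw [leibniz_lie, A.bracket_dh, smul_lie]

namespace IsHWVector

variable {A} {eta eps th : ℂ} {v : V}

lemma lie_h_one_lie_h_neg_one (hv : IsHWVector A V eta eps th v) :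
    ⁅A.h 1, ⁅A.h (-1), v⁆⁆ = (-2 * th) • v := by
  rw [leibniz_lie, A.bracket_hh, (hv.2.1 1 le_rfl).2.2.1, lie_zero, add_zero,
    if_pos (by norm_num), smul_lie, hv.2.2.2.2, smul_smul]
  norm_num

lemma lie_d_zero_lie_h_neg_one (hv : IsHWVector A V eta eps th v) :
    ⁅A.d 0, ⁅A.h (-1), v⁆⁆ = (eta - 1) • ⁅A.h (-1), v⁆ := by
  rw [A.lie_d_lie_h, hv.2.2.1, lie_smul, zero_add, sub_smul, one_smul]
  push_cast
  rw [neg_one_smul, neg_add_eq_sub]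

lemma lie_d_one_lie_h_neg_one (hv : IsHWVector A V eta eps th v) :
    ⁅A.d 1, ⁅A.h (-1), v⁆⁆ = -(eps • v) := by
  rw [A.lie_d_lie_h, (hv.2.1 1 le_rfl).2.2.2, lie_zero, add_zero,
    show (1 : ℤ) + -1 = 0 by norm_num, hv.2.2.2.1]
  push_cast
  rw [neg_one_smul]

lemma lie_d_lie_h_neg_one_of_two_le (hv : IsHWVector A V eta eps th v) {j : ℤ} (hj : 2 ≤ j) :
    ⁅A.d j, ⁅A.h (-1), v⁆⁆ = 0 := by
  rw [A.lie_d_lie_h, (hv.2.1 j (by omega)).2.2.2, (hv.2.1 (j + -1) (by omega)).2.2.1, lie_zero,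
    smul_zero, add_zero]

theorem exists_lie_d_ne_zero_and_lie_d_eq_zero_of_lt (hv : IsHWVector A V eta eps th v)
    (hv0 : v ≠ 0) (hwt : (eta, eps, th) ≠ (0, 0, 0)) :
    ∃ (w : V) (k : ℤ), ⁅A.d k, w⁆ ≠ 0 ∧ ∀ j, k < j → ⁅A.d j, w⁆ = 0 := by
  by_cases heta : eta ≠ 0
  · exact ⟨v, 0, by rw [hv.2.2.1]; exact smul_ne_zero heta hv0,
      fun j hj => (hv.2.1 j hj).2.2.2⟩
  by_cases heps : eps ≠ 0
  · refine ⟨⁅A.h (-1), v⁆, 1, ?_, fun j hj => hv.lie_d_lie_h_neg_one_of_two_le hj⟩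
    rw [hv.lie_d_one_lie_h_neg_one]
    exact neg_ne_zero.mpr (smul_ne_zero heps hv0)
  push Not at heta heps
  have hth : th ≠ 0 := fun hth => hwt (by rw [heta, heps, hth])
  have hw : ⁅A.h (-1), v⁆ ≠ 0 := fun hw => by
    have := hv.lie_h_one_lie_h_neg_one
    rw [hw, lie_zero, eq_comm] at this
    exact smul_ne_zero (mul_ne_zero (by norm_num) hth) hv0 this
  refine ⟨⁅A.h (-1), v⁆, 0, ?_, fun j hj => ?_⟩
  · rw [hv.lie_d_zero_lie_h_neg_one, heta, zero_sub, neg_one_smul]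
    exact neg_ne_zero.mpr hw
  · obtain rfl | hj := eq_or_lt_of_le (show 1 ≤ j by omega)
    · rw [hv.lie_d_one_lie_h_neg_one, heps, zero_smul, neg_zero]
    · exact hv.lie_d_lie_h_neg_one_of_two_le hj

end IsHWVector

theorem uAct_omegaLMR_tmul {k : ℤ} {w : V} (hw : ∀ j, k < j → ⁅A.d j, w⁆ = 0) (r : ℕ) (g : M) :
    uAct (M ⊗[ℂ] V) (omegaLMR A (2 * k + 1 + r) (k + 1) r) (g ⊗ₜ[ℂ] w) =
      uAct M (omegaLMR A (2 * k + 1 + r) (k + 1) r) g ⊗ₜ w +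
        ⁅A.d (k + 1 + r), g⁆ ⊗ₜ ⁅A.d k, w⁆ := by
  have hsplit : ∀ i ∈ range (r + 1), ((r.choose i : ℂ) * (-1) ^ (r - i)) •
      ⁅A.d (2 * k + 1 + r - (k + 1) - i), ⁅A.d (k + 1 + i), g ⊗ₜ[ℂ] w⁆⁆ =
        (((r.choose i : ℂ) * (-1) ^ (r - i)) •
          ⁅A.d (2 * k + 1 + r - (k + 1) - i), ⁅A.d (k + 1 + i), g⁆⁆) ⊗ₜ w +
        ((r.choose i : ℂ) * (-1) ^ (r - i)) •
          (⁅A.d (k + 1 + i), g⁆ ⊗ₜ ⁅A.d (2 * k + 1 + r - (k + 1) - i), w⁆) := fun i _ => by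
    rw [lie_lie_tmul_of_lie_eq_zero _ _ (hw _ (by omega)), smul_add, TensorProduct.smul_tmul']
  rw [uAct_omegaLMR, uAct_omegaLMR, sum_congr rfl hsplit, sum_add_distrib,
    ← TensorProduct.sum_tmul]
  congr 1
  rw [sum_eq_single_of_mem r (self_mem_range_succ r) fun i hi hir => by
      rw [hw _ (by simp at hi; omega), TensorProduct.tmul_zero, smul_zero],
    show 2 * k + 1 + r - (k + 1) - r = k by ring]
  simp

end LieModules

theorem stmt_10_general {L : Type} [LieRing L] [LieAlgebra ℂ L] (A : AVAlgebra L)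
    (lam al be ga eta eps th : ℂ) (hlam : lam ≠ 0)
    (hwt : (eta, eps, th) ≠ (0, 0, 0))
    (M : Type) [AddCommGroup M] [Module ℂ M] [LieRingModule L M] [LieModule ℂ L M] (φ : M ≃ₗ[ℂ] Pst)
    (hM : IsOmega A lam al be ga M φ ∨ IsDelta A lam al be ga M φ ∨
      IsTheta A lam al be ga M φ)
    (V : Type) [AddCommGroup V] [Module ℂ V] [LieRingModule L V] [LieModule ℂ L V] (hV : IsIrrHW A V eta eps th) :
    ∀ r : ℕ, 2 < r → ∀ g : M, g ≠ 0 →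
      ∃ (v : V) (l m : ℤ), uAct (M ⊗[ℂ] V) (omegaLMR A l m r) (g ⊗ₜ[ℂ] v) ≠ 0 := by
  intro r hr g hg
  have hd : ∀ (i : ℤ) (x : M), φ ⁅A.d i, x⁆ = dOp lam ga i (φ x) := by
    rcases hM with h | h | h <;> exact h.2.2.2.1
  obtain ⟨-, v, hv0, -, hv⟩ := hV
  obtain ⟨w, k, hwk, hw⟩ := hv.exists_lie_d_ne_zero_and_lie_d_eq_zero_of_lt hv0 hwt
  refine ⟨w, 2 * k + 1 + r, k + 1, ?_⟩
  rw [uAct_omegaLMR_tmul A hw, uAct_omegaLMR_eq_zero A hlam hd hr, TensorProduct.zero_tmul,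
    zero_add]
  exact tmul_ne_zero (lie_d_ne_zero A hlam hd _ hg) hwk

/-- for `r > 2` and `0 ≠ g ∈ M(λ,α,β,γ)` there are `v ∈ V(η,ε,θ)` and
`l, m ∈ ℤ` with `ω_{l,m}^{(r)} · (g ⊗ v) ≠ 0`. -/
theorem stmt_10 {L : Type} [LieRing L] [LieAlgebra ℂ L] (A : AVAlgebra L)
    (lam al be ga eta eps th : ℂ) (hlam : lam ≠ 0) (hal : al ≠ 0)
    (hwt : (eta, eps, th) ≠ (0, 0, 0))
    (M : Type) [AddCommGroup M] [Module ℂ M] [LieRingModule L M] [LieModule ℂ L M] (φ : M ≃ₗ[ℂ] Pst)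
    (hM : IsOmega A lam al be ga M φ ∨ IsDelta A lam al be ga M φ ∨
      IsTheta A lam al be ga M φ)
    (V : Type) [AddCommGroup V] [Module ℂ V] [LieRingModule L V] [LieModule ℂ L V] (hV : IsIrrHW A V eta eps th) :
    ∀ r : ℕ, 2 < r → ∀ g : M, g ≠ 0 →
      ∃ (v : V) (l m : ℤ), uAct (M ⊗[ℂ] V) (omegaLMR A l m r) (g ⊗ₜ[ℂ] v) ≠ 0 :=
  stmt_10_general A lam al be ga eta eps th hlam hwt M φ hM V hV

end
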